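/- arXiv:1703.07064 — 4 statements merged into one kernel-verified Lean document; each statement's English description precedes it below -/
import Mathlib

section
/- The number of monic separable polynomials of degree d in (ℤ/p)[x], where p is prime and d ≥ 2, is p^d - p^{d-1}. Here a polynomial f over a commutative ring R is separable if R[x]/(f) is a separable R-algebra; for monic f over the field ℤ/p this is equivalent to f being squarefree (equivalently, gcd(f, f') = 1). -/
/-!
Every nonzero element of a unique factorization monoid is `a ^ 2 * b` with `b` squarefree, and in a
GCD monoid this decomposition is unique up to associates; for monic polynomials over a field it is
therefore unique with `a` and `b` monic. Sorting the `q ^ d` monic polynomials of degree `d` over a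
field with `q` elements by the degree `i` of `a` gives `q ^ d = ∑_{i ≤ d/2} q ^ i * s (d - 2 i)`,
where `s n` counts the squarefree monic polynomials of degree `n`. Subtracting `q` times the same
identity for `d - 2` leaves `s d = q ^ d - q ^ (d - 1)`. Over the perfect field `ℤ/p`, separable
means squarefree.
-/

open Polynomial

theorem exists_eq_sq_mul_squarefree {R : Type*} [CommMonoidWithZero R]
    [UniqueFactorizationMonoid R] {x : R} (hx : x ≠ 0) :
    ∃ a b : R, Squarefree b ∧ x = a ^ 2 * b := by
  induction x using WfDvdMonoid.induction_on_irreducible with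
  | zero => contradiction
  | unit u hu => exact ⟨1, u, hu.squarefree, by rw [one_pow, one_mul]⟩
  | mul y p hy hp ih =>
    obtain ⟨a, b, hb, rfl⟩ := ih hy
    by_cases hpb : p ∣ b
    · obtain ⟨b', rfl⟩ := hpb
      refine ⟨p * a, b', hb.of_mul_right, ?_⟩
      rw [mul_pow, sq p]
      ac_rfl
    · refine ⟨a, p * b, ?_, mul_left_comm _ _ _⟩
      exact squarefree_mul_iff.mpr ⟨hp.isRelPrime_iff_not_dvd.mpr hpb, hp.squarefree, hb⟩

theorem Squarefree.isUnit_of_sq_dvd_sq_mul {α : Type*} [CommMonoid α] [DecompositionMonoid α]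
    {a c e : α} (he : Squarefree e) (hac : IsRelPrime a c) (h : a ^ 2 ∣ c ^ 2 * e) : IsUnit a :=
  he a (sq a ▸ (hac.pow (m := 2) (n := 2)).dvd_of_dvd_mul_left h)

theorem associated_of_sq_mul_squarefree_eq {α : Type*} [CommMonoidWithZero α] [GCDMonoid α]
    {a b c e : α} (hb : Squarefree b) (he : Squarefree e) (h0 : a ^ 2 * b ≠ 0)
    (h : a ^ 2 * b = c ^ 2 * e) : Associated a c ∧ Associated b e := by
  have ha : a ≠ 0 := by rintro rfl; simp at h0
  obtain ⟨a', c', hga, hgc, hunit⟩ := extract_gcd a c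
  have hg : gcd a c ≠ 0 := fun hg => ha ((gcd_eq_zero_iff a c).mp hg).1
  have h' : a' ^ 2 * b = c' ^ 2 * e := by
    refine mul_left_cancel₀ (pow_ne_zero 2 hg) ?_
    rw [← mul_assoc, ← mul_assoc, ← mul_pow, ← mul_pow, ← hga, ← hgc, h]
  have hrel : IsRelPrime a' c' := gcd_isUnit_iff_isRelPrime.mp hunit
  have ha' : IsUnit a' := he.isUnit_of_sq_dvd_sq_mul hrel ⟨b, h'.symm⟩
  have hc' : IsUnit c' := hb.isUnit_of_sq_dvd_sq_mul hrel.symm ⟨e, h'⟩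
  have hac : Associated a c := by
    have := (associated_mul_unit_left (gcd a c) a' ha').trans
      (associated_mul_unit_left (gcd a c) c' hc').symm
    rwa [← hga, ← hgc] at this
  exact ⟨hac, Associated.of_mul_left (h ▸ Associated.refl _) hac.pow_pow (pow_ne_zero 2 ha)⟩

namespace Polynomial

section Semiring

variable (R : Type*) [Semiring R]

def monicOfNatDegree (n : ℕ) : Set R[X] := {f | f.Monic ∧ f.natDegree = n}

def squarefreeMonicOfNatDegree (n : ℕ) : Set R[X] :=
  {f | f.Monic ∧ f.natDegree = n ∧ Squarefree f}

theorem squarefreeMonicOfNatDegree_subset (n : ℕ) :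
    squarefreeMonicOfNatDegree R n ⊆ monicOfNatDegree R n :=
  fun _ hf => ⟨hf.1, hf.2.1⟩

theorem Monic.natDegree_sq_mul {R : Type*} [Semiring R] {a b : R[X]} (ha : a.Monic)
    (hb : b.Monic) : (a ^ 2 * b).natDegree = 2 * a.natDegree + b.natDegree := by
  rw [(ha.pow 2).natDegree_mul hb, ha.natDegree_pow]

noncomputable def sqMulSquarefree (d : ℕ) :
    (Σ i : Fin (d / 2 + 1), monicOfNatDegree R i × squarefreeMonicOfNatDegree R (d - 2 * i)) →
      monicOfNatDegree R d
  | ⟨i, a, b⟩ => ⟨a.1 ^ 2 * b.1, (a.2.1.pow 2).mul b.2.1, by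
      rw [a.2.1.natDegree_sq_mul b.2.1, a.2.2, b.2.2.1]
      have := i.isLt
      omega⟩

variable [Nontrivial R]

noncomputable def monicOfNatDegreeEquiv (n : ℕ) : monicOfNatDegree R n ≃ (Fin n → R) :=
  (monicEquivDegreeLT n).trans (degreeLTEquiv R n).toEquiv

theorem card_monicOfNatDegree (n : ℕ) : Nat.card (monicOfNatDegree R n) = Nat.card R ^ n := by
  rw [Nat.card_congr (monicOfNatDegreeEquiv R n), Nat.card_fun, Nat.card_fin]

instance [Finite R] (n : ℕ) : Finite (monicOfNatDegree R n) :=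
  .of_equiv _ (monicOfNatDegreeEquiv R n).symm

instance [Finite R] (n : ℕ) : Finite (squarefreeMonicOfNatDegree R n) :=
  Finite.Set.subset _ (squarefreeMonicOfNatDegree_subset R n)

end Semiring

section Field

variable {K : Type*} [Field K]

theorem Monic.exists_eq_sq_mul_squarefree {f : K[X]} (hf : f.Monic) :
    ∃ a b : K[X], a.Monic ∧ b.Monic ∧ Squarefree b ∧ f = a ^ 2 * b := by
  classical
  obtain ⟨a, b, hb, rfl⟩ := _root_.exists_eq_sq_mul_squarefree hf.ne_zero
  have ha0 : a ≠ 0 := by rintro rfl; simp at hf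
  have hb0 : b ≠ 0 := hb.ne_zero
  refine ⟨normalize a, normalize b, monic_normalize ha0, monic_normalize hb0,
    (normalize_associated b).symm.squarefree_iff.mp hb, ?_⟩
  rw [← hf.normalize_eq_self]
  simp only [sq, normalize_mul]

theorem Monic.eq_of_sq_mul_squarefree_eq {a b c e : K[X]} (ha : a.Monic) (hb : b.Monic)
    (hc : c.Monic) (he : e.Monic) (hsb : Squarefree b) (hse : Squarefree e)
    (h : a ^ 2 * b = c ^ 2 * e) : a = c ∧ b = e := by
  classical
  obtain ⟨hac, hbe⟩ := associated_of_sq_mul_squarefree_eq hsb hse ((ha.pow 2).mul hb).ne_zero h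
  exact ⟨eq_of_monic_of_associated ha hc hac, eq_of_monic_of_associated hb he hbe⟩

variable (K)

theorem sqMulSquarefree_bijective (d : ℕ) : Function.Bijective (sqMulSquarefree K d) := by
  constructor
  · rintro ⟨i, ⟨a, ha, hai⟩, ⟨b, hb, _, hsb⟩⟩ ⟨j, ⟨c, hc, hcj⟩, ⟨e, he, _, hse⟩⟩ h
    obtain ⟨rfl, rfl⟩ := ha.eq_of_sq_mul_squarefree_eq hb hc he hsb hse (congrArg Subtype.val h)
    obtain rfl : i = j := Fin.ext (hai.symm.trans hcj)
    rfl
  · rintro ⟨f, hf, rfl⟩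
    obtain ⟨a, b, ha, hb, hsb, rfl⟩ := hf.exists_eq_sq_mul_squarefree
    have hdeg := ha.natDegree_sq_mul hb
    exact ⟨⟨⟨a.natDegree, by omega⟩, ⟨a, ha, rfl⟩, ⟨b, hb, by simp only; omega, hsb⟩⟩, rfl⟩

variable [Finite K]

theorem pow_card_eq_sum_card_squarefreeMonicOfNatDegree (d : ℕ) :
    Nat.card K ^ d = ∑ i ∈ Finset.range (d / 2 + 1),
      Nat.card K ^ i * Nat.card (squarefreeMonicOfNatDegree K (d - 2 * i)) := by
  rw [← card_monicOfNatDegree, ← Nat.card_eq_of_bijective _ (sqMulSquarefree_bijective K d),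
    Nat.card_sigma, ← Fin.sum_univ_eq_sum_range
      (fun i => Nat.card K ^ i * Nat.card (squarefreeMonicOfNatDegree K (d - 2 * i)))]
  simp only [Nat.card_prod, card_monicOfNatDegree]

theorem card_squarefreeMonicOfNatDegree {d : ℕ} (hd : 2 ≤ d) :
    Nat.card (squarefreeMonicOfNatDegree K d) = Nat.card K ^ d - Nat.card K ^ (d - 1) := by
  have hsum := pow_card_eq_sum_card_squarefreeMonicOfNatDegree K d
  set q := Nat.card K
  rw [show d / 2 = (d - 2) / 2 + 1 by omega, Finset.sum_range_succ'] at hsum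
  have htail : ∑ i ∈ Finset.range ((d - 2) / 2 + 1),
      q ^ (i + 1) * Nat.card (squarefreeMonicOfNatDegree K (d - 2 * (i + 1))) = q ^ (d - 1) := by
    rw [show d - 1 = d - 2 + 1 by omega, pow_succ', pow_card_eq_sum_card_squarefreeMonicOfNatDegree,
      Finset.mul_sum]
    refine Finset.sum_congr rfl fun i _ => ?_
    rw [pow_succ', mul_assoc, show d - 2 * (i + 1) = d - 2 - 2 * i by omega]
  rw [htail, pow_zero, one_mul, mul_zero, Nat.sub_zero] at hsum
  omega

end Field

end Polynomial

/-- Carlitz: the number of monic separable polynomials of degree `d ≥ 2` over `ℤ/p`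
is `p^d - p^(d-1)`. -/
theorem count_monic_separable_zmod_p (p d : ℕ) (hp : p.Prime) (hd : 2 ≤ d) :
    Nat.card {f : (ZMod p)[X] | f.Monic ∧ f.natDegree = d ∧ f.Separable}
      = p ^ d - p ^ (d - 1) := by
  have : Fact p.Prime := ⟨hp⟩
  have hsep : {f : (ZMod p)[X] | f.Monic ∧ f.natDegree = d ∧ f.Separable} =
      squarefreeMonicOfNatDegree (ZMod p) d := by
    ext f
    exact and_congr_right' (and_congr_right' PerfectField.separable_iff_squarefree)
  rw [hsep, card_squarefreeMonicOfNatDegree _ hd, Nat.card_zmod]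
end

section
/- The number of monic separable polynomials of degree d in (ℤ/p^k)[x], for p prime, k ≥ 1 and d ≥ 2, is p^{kd-1}(p-1) = φ(p^{kd}), where φ is Euler's totient function. -/
/-!
Over a finite field `K` with `q` elements, every monic `f` factors uniquely as `s * m ^ 2` with
`s, m` monic and `s` squarefree. Counting monic polynomials of degree `n` by the degree `b` of `m`
gives `∑_b sf(n - 2b) q^b = q^n`, where `sf(n)` counts the monic squarefree ones, and comparing this identity at `n` and `n + 2` yields
`sf(n) = q^n - q^(n-1)` for `n ≥ 2`.

Over `ℤ/p^k`, the kernel of reduction mod `p` is nilpotent, so a Bézout identity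
`A f + B f' = 1` modulo `p` lifts to one with right-hand side a unit: `f` is separable iff its
reduction is squarefree. Reduction of the `d` non-leading coefficients is `p^((k-1)d)`-to-one.
-/

open Polynomial

section SquarefreeDecomposition

variable {α : Type*} [CommMonoidWithZero α] [UniqueFactorizationMonoid α]

theorem exists_squarefree_mul_sq {a : α} (ha : a ≠ 0) :
    ∃ s m : α, Squarefree s ∧ a = s * m ^ 2 := by
  induction a using UniqueFactorizationMonoid.induction_on_prime with
  | h₁ => contradiction
  | h₂ u hu => exact ⟨u, 1, hu.squarefree, by simp⟩
  | h₃ a p ha₀ hp ih =>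
    obtain ⟨s, m, hs, rfl⟩ := ih ha₀
    by_cases hps : p ∣ s
    · obtain ⟨t, rfl⟩ := hps
      exact ⟨t, p * m, hs.of_mul_right, by simp only [sq]; ac_rfl⟩
    · exact ⟨p * s, m,
        squarefree_mul_iff.mpr ⟨hp.irreducible.isRelPrime_iff_not_dvd.mpr hps, hp.squarefree, hs⟩,
        (mul_assoc p s _).symm⟩

theorem associated_of_squarefree_mul_sq_eq {s s' m m' : α} (hs : Squarefree s)
    (hs' : Squarefree s') (hm : m ≠ 0) (h : s * m ^ 2 = s' * m' ^ 2) :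
    Associated s s' ∧ Associated m m' := by
  induction m using UniqueFactorizationMonoid.induction_on_prime generalizing m' s s' with
  | h₁ => contradiction
  | h₂ u hu =>
    have hm' : IsUnit m' := hs m' <| ((hu.pow 2).dvd_mul_right).mp ⟨s', by rw [h, sq]; ac_rfl⟩
    refine ⟨(associated_mul_unit_right s _ (hu.pow 2)).trans ?_,
      (associated_one_iff_isUnit.2 hu).trans (associated_one_iff_isUnit.2 hm').symm⟩
    rw [h]
    exact (associated_mul_unit_right s' _ (hm'.pow 2)).symm
  | h₃ a p ha₀ hp ih =>
    have hpm' : p ∣ m' := by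
      by_contra hpm'
      have hdvd : p ^ 2 ∣ s' * m' ^ 2 := h ▸ (pow_dvd_pow_of_dvd (dvd_mul_right p a) 2).mul_left s
      have := hp.pow_dvd_of_dvd_mul_right 2 (fun h => hpm' (hp.dvd_of_dvd_pow h)) hdvd
      exact hp.not_isUnit (hs' p (by rwa [← sq]))
    obtain ⟨b, rfl⟩ := hpm'
    have hab : s * a ^ 2 = s' * b ^ 2 := by
      refine mul_left_cancel₀ (pow_ne_zero 2 hp.ne_zero) ?_
      calc p ^ 2 * (s * a ^ 2) = s * (p * a) ^ 2 := by rw [mul_pow]; ac_rfl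
        _ = s' * (p * b) ^ 2 := h
        _ = p ^ 2 * (s' * b ^ 2) := by rw [mul_pow]; ac_rfl
    obtain ⟨h1, h2⟩ := ih hs hs' ha₀ hab
    exact ⟨h1, h2.mul_left p⟩

end SquarefreeDecomposition

theorem AddMonoidHom.card_subtype_comp_mul_card {G H : Type*} [AddGroup G] [AddGroup H] [Finite G]
    {φ : G →+ H} (hφ : Function.Surjective φ) (P : H → Prop) :
    Nat.card {g // P (φ g)} * Nat.card H = Nat.card {h // P h} * Nat.card G := by
  have hfiber (Q : H → Prop) : Nat.card {g // Q (φ g)} = Nat.card {h // Q h} * Nat.card φ.ker := by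
    have : Finite H := Finite.of_surjective φ hφ
    have := Fintype.ofFinite {h // Q h}
    have hker (h : H) : Nat.card {g // φ g = h} = Nat.card φ.ker :=
      Nat.card_congr (φ.fiberEquivKerOfSurjective hφ h)
    rw [← Nat.card_congr (Equiv.sigmaSubtypeFiberEquivSubtype φ fun _ => Iff.rfl), Nat.card_sigma]
    simp only [hker, Finset.sum_const, Finset.card_univ, smul_eq_mul, Nat.card_eq_fintype_card]
  have hG := hfiber fun _ => True
  rw [Nat.card_congr (Equiv.subtypeUnivEquiv fun _ => trivial),
    Nat.card_congr (Equiv.subtypeUnivEquiv fun _ => trivial)] at hG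
  rw [hfiber P, hG, mul_assoc, mul_comm (Nat.card φ.ker)]

theorem ZMod.ker_castHom_le_nilradical (p : ℕ) {k : ℕ} (hk : k ≠ 0) :
    RingHom.ker (ZMod.castHom (dvd_pow_self p hk) (ZMod p)) ≤ nilradical (ZMod (p ^ k)) := by
  intro c hc
  rw [RingHom.mem_ker, ZMod.castHom_apply, ← ZMod.intCast_zmod_cast c,
    ZMod.cast_intCast (dvd_pow_self p hk), ZMod.intCast_zmod_eq_zero_iff_dvd] at hc
  refine mem_nilradical.mpr ⟨k, ?_⟩
  rw [← ZMod.intCast_zmod_cast c, ← Int.cast_pow, ZMod.intCast_zmod_eq_zero_iff_dvd]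
  exact_mod_cast pow_dvd_pow_of_dvd hc k

namespace Polynomial

section NilpotentKernel

variable {R : Type*} [CommRing R]

theorem isCoprime_of_isCoprime_map {S : Type*} [CommRing S] {φ : R →+* S}
    (hφ : Function.Surjective φ) (hker : RingHom.ker φ ≤ nilradical R) {a b : R[X]}
    (h : IsCoprime (a.map φ) (b.map φ)) : IsCoprime a b := by
  obtain ⟨u, v, huv⟩ := h
  obtain ⟨A, rfl⟩ := map_surjective φ hφ u
  obtain ⟨B, rfl⟩ := map_surjective φ hφ v
  have hnil : IsNilpotent (A * a + B * b - 1) := by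
    refine Polynomial.isNilpotent_iff.mpr fun i => hker ?_
    rw [RingHom.mem_ker, ← coeff_map]
    simp [Polynomial.map_sub, Polynomial.map_add, Polynomial.map_mul, huv]
  obtain ⟨w, hw⟩ := hnil.isUnit_one_add
  refine ⟨↑w⁻¹ * A, ↑w⁻¹ * B, ?_⟩
  rw [mul_assoc, mul_assoc, ← mul_add, ← add_sub_cancel 1 (A * a + B * b), ← hw, Units.inv_mul]

theorem separable_iff_squarefree_map {K : Type*} [Field K] [PerfectField K] {φ : R →+* K}
    (hφ : Function.Surjective φ) (hker : RingHom.ker φ ≤ nilradical R) {f : R[X]} :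
    f.Separable ↔ Squarefree (f.map φ) := by
  rw [← PerfectField.separable_iff_squarefree]
  refine ⟨fun h => h.map, fun h => isCoprime_of_isCoprime_map hφ hker ?_⟩
  rwa [← derivative_map]

end NilpotentKernel

section MonicCoefficients

variable (R : Type*) [Semiring R] [Nontrivial R]

noncomputable def monicEquivFun (n : ℕ) :
    {p : R[X] // p.Monic ∧ p.natDegree = n} ≃ (Fin n → R) :=
  (monicEquivDegreeLT n).trans (degreeLTEquiv R n).toEquiv

@[simp]
theorem monicEquivFun_apply {n : ℕ} (p : {p : R[X] // p.Monic ∧ p.natDegree = n}) (i : Fin n) :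
    monicEquivFun R n p i = p.1.coeff i :=
  eraseLead_coeff_of_ne _ (by rw [p.2.2]; exact i.isLt.ne)

instance [Finite R] (n : ℕ) : Finite {p : R[X] // p.Monic ∧ p.natDegree = n} :=
  Finite.of_equiv _ (monicEquivFun R n).symm

theorem card_monic_natDegree_eq [Finite R] (n : ℕ) :
    Nat.card {p : R[X] // p.Monic ∧ p.natDegree = n} = Nat.card R ^ n := by
  rw [Nat.card_congr (monicEquivFun R n), Nat.card_fun, Nat.card_fin]

theorem card_monic_natDegree_eq_and (P : R[X] → Prop) (n : ℕ) :
    Nat.card {p : R[X] // p.Monic ∧ p.natDegree = n ∧ P p} =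
      Nat.card {v : Fin n → R // P ((monicEquivFun R n).symm v)} :=
  Nat.card_congr <| (Equiv.subtypeEquivRight fun _ => and_assoc.symm).trans <|
    (Equiv.subtypeSubtypeEquivSubtypeInter _ _).symm.trans <|
      (monicEquivFun R n).subtypeEquiv fun p => by rw [Equiv.symm_apply_apply]

variable {R} {S : Type*} [Semiring S] [Nontrivial S]

theorem map_monicEquivFun_symm (φ : R →+* S) {n : ℕ} (v : Fin n → R) :
    ((monicEquivFun R n).symm v).1.map φ = ((monicEquivFun S n).symm (φ ∘ v)).1 := by
  set p := (monicEquivFun R n).symm v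
  have hp : (p.1.map φ).Monic ∧ (p.1.map φ).natDegree = n :=
    ⟨p.2.1.map φ, (p.2.1.natDegree_map φ).trans p.2.2⟩
  suffices (⟨_, hp⟩ : {p : S[X] // p.Monic ∧ p.natDegree = n}) = (monicEquivFun S n).symm (φ ∘ v)
    from congrArg Subtype.val this
  rw [Equiv.eq_symm_apply]
  funext i
  rw [monicEquivFun_apply, coeff_map, Function.comp_apply, ← monicEquivFun_apply,
    Equiv.apply_symm_apply]

end MonicCoefficients

theorem card_monic_natDegree_eq_and_map_mul {R S : Type*} [Ring R] [Ring S] [Nontrivial S]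
    [Finite R] {φ : R →+* S} (hφ : Function.Surjective φ) (P : S[X] → Prop) (n : ℕ) :
    Nat.card {f : R[X] // f.Monic ∧ f.natDegree = n ∧ P (f.map φ)} * Nat.card S ^ n =
      Nat.card {g : S[X] // g.Monic ∧ g.natDegree = n ∧ P g} * Nat.card R ^ n := by
  have : Nontrivial R := φ.domain_nontrivial
  simp_rw [card_monic_natDegree_eq_and, map_monicEquivFun_symm]
  have := (φ.toAddMonoidHom.compLeft (Fin n)).card_subtype_comp_mul_card hφ.comp_left
    fun w => P ((monicEquivFun S n).symm w)
  rwa [Nat.card_fun, Nat.card_fun, Nat.card_fin] at this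

theorem Monic.natDegree_mul_sq {R : Type*} [Semiring R] {s m : R[X]} (hs : s.Monic)
    (hm : m.Monic) : (s * m ^ 2).natDegree = s.natDegree + 2 * m.natDegree := by
  rw [hs.natDegree_mul (hm.pow 2), hm.natDegree_pow, mul_comm]

section Field

variable {K : Type*} [Field K]

theorem Monic.exists_squarefree_mul_sq {f : K[X]} (hf : f.Monic) :
    ∃ s m : K[X], s.Monic ∧ m.Monic ∧ Squarefree s ∧ f = s * m ^ 2 := by
  obtain ⟨s, m, hs, rfl⟩ := _root_.exists_squarefree_mul_sq hf.ne_zero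
  have hm : m ≠ 0 := by rintro rfl; simp at hf
  have hc : m.leadingCoeff ≠ 0 := leadingCoeff_ne_zero.mpr hm
  have heq : s * m ^ 2 = s * C (m.leadingCoeff ^ 2) * (m * C m.leadingCoeff⁻¹) ^ 2 := by
    rw [mul_pow, ← C_pow, inv_pow, mul_mul_mul_comm, ← C_mul, mul_inv_cancel₀ (pow_ne_zero 2 hc),
      C_1, mul_one]
  have hm' := monic_mul_leadingCoeff_inv hm
  refine ⟨_, _, (hm'.pow 2).of_mul_monic_right (heq ▸ hf), hm', ?_, heq⟩
  exact (associated_mul_unit_right s _ (isUnit_C.mpr (pow_ne_zero 2 hc).isUnit)).squarefree_iff.mp hs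

theorem Monic.eq_of_squarefree_mul_sq_eq {s s' m m' : K[X]} (hs : s.Monic) (hs' : s'.Monic)
    (hm : m.Monic) (hm' : m'.Monic) (hsf : Squarefree s) (hsf' : Squarefree s')
    (h : s * m ^ 2 = s' * m' ^ 2) : s = s' ∧ m = m' :=
  have h' := associated_of_squarefree_mul_sq_eq hsf hsf' hm.ne_zero h
  ⟨eq_of_monic_of_associated hs hs' h'.1, eq_of_monic_of_associated hm hm' h'.2⟩

variable (K) [Finite K]

theorem sum_card_monic_squarefree_mul_pow (n : ℕ) :
    ∑ b ∈ Finset.range (n / 2 + 1),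
        Nat.card {f : K[X] // f.Monic ∧ f.natDegree = n - 2 * b ∧ Squarefree f} * Nat.card K ^ b =
      Nat.card K ^ n := by
  let SF (b : Fin (n / 2 + 1)) := {s : K[X] // s.Monic ∧ s.natDegree = n - 2 * b ∧ Squarefree s}
  let M (b : ℕ) := {m : K[X] // m.Monic ∧ m.natDegree = b}
  let mulSq : (Σ b, SF b × M b) → M n := fun ⟨b, s, m⟩ =>
    ⟨s.1 * m.1 ^ 2, s.2.1.mul (m.2.1.pow 2), by
      rw [s.2.1.natDegree_mul_sq m.2.1, s.2.2.1, m.2.2]; have := b.isLt; omega⟩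
  have (b : Fin (n / 2 + 1)) : Finite (SF b) :=
    Finite.of_injective (fun s => (⟨s.1, s.2.1, s.2.2.1⟩ : M _)) fun s t h =>
      Subtype.ext (congrArg Subtype.val h :)
  have hbij : Function.Bijective mulSq := by
    refine ⟨fun ⟨b, s, m⟩ ⟨b', s', m'⟩ h => ?_, fun f => ?_⟩
    · obtain ⟨hs, hm⟩ := Monic.eq_of_squarefree_mul_sq_eq s.2.1 s'.2.1 m.2.1 m'.2.1 s.2.2.2
        s'.2.2.2 (congrArg Subtype.val h)
      obtain rfl : b = b' := Fin.ext (m.2.2.symm.trans (hm ▸ m'.2.2))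
      obtain rfl := Subtype.ext hs
      obtain rfl := Subtype.ext hm
      rfl
    · obtain ⟨s, m, hs, hm, hsf, hf⟩ := f.2.1.exists_squarefree_mul_sq
      have hdeg := f.2.2
      rw [hf, hs.natDegree_mul_sq hm] at hdeg
      exact ⟨⟨⟨m.natDegree, by omega⟩, ⟨s, hs, by simp only; omega, hsf⟩, ⟨m, hm, rfl⟩⟩,
        Subtype.ext hf.symm⟩
  rw [← card_monic_natDegree_eq K n, ← Nat.card_congr (Equiv.ofBijective mulSq hbij),
    Nat.card_sigma, ← Fin.sum_univ_eq_sum_range]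
  simp only [Nat.card_prod, M, card_monic_natDegree_eq, SF]

theorem card_monic_squarefree {n : ℕ} (hn : 2 ≤ n) :
    Nat.card {f : K[X] // f.Monic ∧ f.natDegree = n ∧ Squarefree f} =
      Nat.card K ^ (n - 1) * (Nat.card K - 1) := by
  obtain ⟨n, rfl⟩ := Nat.exists_eq_add_of_le' hn
  have hsum := sum_card_monic_squarefree_mul_pow K (n + 2)
  rw [show (n + 2) / 2 + 1 = n / 2 + 1 + 1 by omega, Finset.sum_range_succ'] at hsum
  simp only [show ∀ i, n + 2 - 2 * (i + 1) = n - 2 * i by omega, pow_succ, ← mul_assoc,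
    ← Finset.sum_mul, sum_card_monic_squarefree_mul_pow, mul_zero, Nat.sub_zero, pow_zero,
    mul_one] at hsum
  rw [show n + 2 - 1 = n + 1 from rfl, Nat.mul_sub_one, pow_succ]
  omega

end Field

end Polynomial

/-- The number of monic separable polynomials of degree `d ≥ 2` over `ℤ/p^k`
is `p^(kd-1)(p-1) = φ(p^(kd))`. -/
theorem count_monic_separable_zmod_prime_pow (p k d : ℕ) (hp : p.Prime) (hk : 1 ≤ k)
    (hd : 2 ≤ d) :
    Nat.card {f : (ZMod (p ^ k))[X] | f.Monic ∧ f.natDegree = d ∧ f.Separable}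
        = p ^ (k * d - 1) * (p - 1) ∧
      p ^ (k * d - 1) * (p - 1) = Nat.totient (p ^ (k * d)) := by
  have : Fact p.Prime := ⟨hp⟩
  have hk₀ : k ≠ 0 := by omega
  have hkd : 1 ≤ k * d := Nat.mul_pos (by omega) (by omega)
  let φ := ZMod.castHom (dvd_pow_self p hk₀) (ZMod p)
  have hφ : Function.Surjective φ := ZMod.castHom_surjective _
  have hsep (f : (ZMod (p ^ k))[X]) : f.Separable ↔ Squarefree (f.map φ) :=
    separable_iff_squarefree_map hφ (ZMod.ker_castHom_le_nilradical p hk₀)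
  have hcount := card_monic_natDegree_eq_and_map_mul hφ Squarefree d
  rw [card_monic_squarefree (ZMod p) hd, Nat.card_zmod, Nat.card_zmod, ← pow_mul] at hcount
  refine ⟨Nat.eq_of_mul_eq_mul_right (pow_pos hp.pos d) ?_,
    (Nat.totient_prime_pow hp (by omega)).symm⟩
  simp only [Set.coe_ofPred, hsep]
  rw [hcount, mul_right_comm, ← pow_add, mul_right_comm _ (p - 1), ← pow_add]
  congr 2
  omega
end

section
/- A monic polynomial f over a commutative ring R with no nontrivial idempotents is separable if and only if its discriminant disc(f) = det(A) is a unit in R, where A is the matrix with (i+1,j+1)-entry tr(x^{i+j}) and tr is the trace form of R[x]/(f). -/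
open TensorProduct Polynomial

/-- An `R`-algebra `A` is separable if `A` is projective as a module over the
enveloping algebra `A ⊗[R] A` (for commutative `A`, which acts via multiplication). -/
def IsSeparableAlgebra (R A : Type*) [CommRing R] [CommRing A] [Algebra R A] : Prop :=
  letI : Module (A ⊗[R] A) A :=
    Module.compHom A (Algebra.TensorProduct.lmul' (S := A) R).toRingHom
  Module.Projective (A ⊗[R] A) A

/-- A polynomial `f ∈ R[x]` is separable if `R[x]/(f)` is a separable `R`-algebra. -/
def Polynomial.IsSeparablePoly {R : Type*} [CommRing R] (f : R[X]) : Prop :=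
  IsSeparableAlgebra R (AdjoinRoot f)

/-!
`S` is projective over `S ⊗[R] S` iff the multiplication map `μ : S ⊗[R] S → S` splits, i.e. iff
there is a separability idempotent `t`: `(s ⊗ 1) t = (1 ⊗ s) t` for all `s`, and `μ t = 1`.

For `S` free with finite basis `b`, consider `Φ : S ⊗[R] S → End_R S`, `Φ (u ⊗ v) x = tr (u x) v`.
Computing the trace in the basis `b` shows `Φ t 1 = μ t` whenever `t` satisfies the commutation
relation; as `Φ ((s ⊗ 1) t) = Φ t ∘ s` and `Φ ((1 ⊗ s) t) = s ∘ Φ t`, a separability idempotent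
has `Φ t = id`. Writing `t = ∑ cₖ ⊗ bₖ`, this says `tr (bᵢ cₖ) = δᵢₖ`, so `(cₖ)` is a trace-dual
family and the trace matrix of `b` is invertible. Conversely, a trace-dual family `(cₖ)` (which
exists when the trace matrix is invertible) makes `Φ` injective and `Φ (∑ cₖ ⊗ bₖ) = id`, and the
same identities show that `∑ cₖ ⊗ bₖ` is a separability idempotent.
-/

open Algebra.TensorProduct (lmul' lmul'_apply_tmul tmul_mul_tmul)

section

variable {R S : Type*} [CommRing R] [CommRing S] [Algebra R S]

variable (R) in
structure IsSeparabilityIdempotent (t : S ⊗[R] S) : Prop where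
  tmul_one_mul (s : S) : (s ⊗ₜ[R] 1) * t = (1 ⊗ₜ s) * t
  lmul'_eq_one : lmul' R t = 1

theorem IsSeparabilityIdempotent.mul_eq_lmul'_tmul_one_mul {t : S ⊗[R] S}
    (ht : IsSeparabilityIdempotent R t) (z : S ⊗[R] S) : z * t = (lmul' R z ⊗ₜ 1) * t := by
  induction z using TensorProduct.induction_on with
  | zero => simp
  | tmul a b =>
    calc (a ⊗ₜ[R] b) * t = (a ⊗ₜ[R] 1) * ((1 ⊗ₜ b) * t) := by
          rw [← mul_assoc, tmul_mul_tmul, mul_one, one_mul]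
      _ = ((a * b) ⊗ₜ[R] 1) * t := by
          rw [← ht.tmul_one_mul, ← mul_assoc, tmul_mul_tmul, mul_one]
      _ = (lmul' R (a ⊗ₜ[R] b) ⊗ₜ 1) * t := by rw [lmul'_apply_tmul]
  | add x y hx hy => rw [add_mul, hx, hy, map_add, add_tmul, add_mul]

section EnvelopingModule

variable (R S) in
abbrev envelopingModule : Module (S ⊗[R] S) S :=
  Module.compHom S (lmul' (S := S) R).toRingHom

attribute [local instance] envelopingModule

theorem envelopingModule_smul_def (z : S ⊗[R] S) (s : S) : z • s = lmul' R z * s := rfl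

theorem isSeparableAlgebra_iff_exists_isSeparabilityIdempotent :
    IsSeparableAlgebra R S ↔ ∃ t : S ⊗[R] S, IsSeparabilityIdempotent R t := by
  let μ : S ⊗[R] S →ₗ[S ⊗[R] S] S := LinearMap.toSpanSingleton _ S 1
  have hμ (z : S ⊗[R] S) : μ z = lmul' R z := mul_one _
  change Module.Projective (S ⊗[R] S) S ↔ _
  constructor
  · intro
    obtain ⟨σ, hσ⟩ := Module.projective_lifting_property μ LinearMap.id
      fun s => ⟨s ⊗ₜ 1, by rw [hμ, lmul'_apply_tmul, mul_one]⟩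
    refine ⟨σ 1, fun s => ?_, by simpa [hμ] using LinearMap.congr_fun hσ 1⟩
    have hleft : (s ⊗ₜ[R] (1 : S)) • (1 : S) = s := by simp [envelopingModule_smul_def]
    have hright : ((1 : S) ⊗ₜ[R] s) • (1 : S) = s := by simp [envelopingModule_smul_def]
    rw [← smul_eq_mul, ← smul_eq_mul, ← σ.map_smul, ← σ.map_smul, hleft, hright]
  · rintro ⟨t, ht⟩
    let σ : S →ₗ[S ⊗[R] S] S ⊗[R] S :=
      { toFun s := (s ⊗ₜ 1) * t
        map_add' x y := by rw [add_tmul, add_mul]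
        map_smul' z s := by
          rw [envelopingModule_smul_def, RingHom.id_apply, smul_eq_mul, mul_left_comm,
            ht.mul_eq_lmul'_tmul_one_mul z, ← mul_assoc, tmul_mul_tmul, mul_one, mul_comm s] }
    refine Module.Projective.of_split σ μ (LinearMap.ext fun s => ?_)
    simp [σ, hμ, ht.lmul'_eq_one]

end EnvelopingModule

variable (R S) in
noncomputable def traceTensorHom : S ⊗[R] S →ₗ[R] Module.End R S :=
  dualTensorHom R S S ∘ₗ TensorProduct.map (Algebra.traceForm R S) LinearMap.id

@[simp]
theorem traceTensorHom_tmul_apply (u v x : S) :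
    traceTensorHom R S (u ⊗ₜ v) x = Algebra.trace R S (u * x) • v := rfl

theorem traceTensorHom_tmul_one_mul (s : S) (z : S ⊗[R] S) :
    traceTensorHom R S ((s ⊗ₜ 1) * z) = traceTensorHom R S z ∘ₗ LinearMap.mulLeft R s := by
  induction z using TensorProduct.induction_on with
  | zero => simp
  | tmul u v => ext x; simp [mul_left_comm s u, mul_assoc]
  | add x y hx hy => rw [mul_add, map_add, map_add, hx, hy, LinearMap.add_comp]

theorem traceTensorHom_one_tmul_mul (s : S) (z : S ⊗[R] S) :
    traceTensorHom R S ((1 ⊗ₜ s) * z) = LinearMap.mulLeft R s ∘ₗ traceTensorHom R S z := by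
  induction z using TensorProduct.induction_on with
  | zero => simp
  | tmul u v => ext x; simp
  | add x y hx hy => rw [mul_add, map_add, map_add, hx, hy, LinearMap.comp_add]

section Basis

variable {ι : Type*} [DecidableEq ι] (b : Module.Basis ι R S)

theorem repr_traceTensorHom_apply (z : S ⊗[R] S) (x : S) (k : ι) :
    b.repr (traceTensorHom R S z x) k =
      Algebra.trace R S (TensorProduct.equivFinsuppOfBasisRight b z k * x) := by
  induction z using TensorProduct.induction_on with
  | zero => simp
  | tmul u v => simp [mul_comm]
  | add x y hx hy => simp [hx, hy, add_mul]

theorem sum_equivFinsuppOfBasisLeft_tmul_one_mul [Fintype ι] (z : S ⊗[R] S) :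
    ∑ i, TensorProduct.equivFinsuppOfBasisLeft b ((b i ⊗ₜ 1) * z) i = traceTensorHom R S z 1 := by
  induction z using TensorProduct.induction_on with
  | zero => simp
  | tmul u v =>
    simp [Algebra.trace_eq_matrix_trace b, Matrix.trace, Algebra.leftMulMatrix_eq_repr_mul,
      mul_comm, Finset.sum_smul]
  | add x y hx hy => simp [mul_add, Finset.sum_add_distrib, hx, hy]

theorem sum_equivFinsuppOfBasisLeft_one_tmul_mul [Fintype ι] (z : S ⊗[R] S) :
    ∑ i, TensorProduct.equivFinsuppOfBasisLeft b ((1 ⊗ₜ b i) * z) i = lmul' R z := by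
  induction z using TensorProduct.induction_on with
  | zero => simp
  | tmul u v =>
    simp only [tmul_mul_tmul, one_mul, TensorProduct.equivFinsuppOfBasisLeft_apply_tmul_apply,
      lmul'_apply_tmul, ← smul_mul_assoc, ← Finset.sum_mul, b.sum_repr]
  | add x y hx hy => simp [mul_add, Finset.sum_add_distrib, hx, hy]

end Basis

theorem traceTensorHom_apply_one_of_tmul_one_mul [Module.Free R S] [Module.Finite R S]
    {z : S ⊗[R] S} (hz : ∀ s : S, (s ⊗ₜ[R] 1) * z = (1 ⊗ₜ s) * z) :
    traceTensorHom R S z 1 = lmul' R z := by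
  classical
  let b := Module.Free.chooseBasis R S
  rw [← sum_equivFinsuppOfBasisLeft_tmul_one_mul b, ← sum_equivFinsuppOfBasisLeft_one_tmul_mul b]
  simp only [hz]

theorem IsSeparabilityIdempotent.traceTensorHom_eq_id [Module.Free R S] [Module.Finite R S]
    {t : S ⊗[R] S} (ht : IsSeparabilityIdempotent R t) : traceTensorHom R S t = LinearMap.id := by
  ext x
  calc traceTensorHom R S t x = traceTensorHom R S ((x ⊗ₜ 1) * t) 1 := by
        rw [traceTensorHom_tmul_one_mul, LinearMap.comp_apply, LinearMap.mulLeft_apply, mul_one]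
    _ = x * lmul' R t := by
        rw [ht.tmul_one_mul, traceTensorHom_one_tmul_mul, LinearMap.comp_apply,
          LinearMap.mulLeft_apply, traceTensorHom_apply_one_of_tmul_one_mul ht.tmul_one_mul]
    _ = x := by rw [ht.lmul'_eq_one, mul_one]

theorem traceMatrix_mul_repr {ι : Type*} [Fintype ι] (b : Module.Basis ι R S) (c : ι → S)
    (i k : ι) : (Algebra.traceMatrix R b * Matrix.of fun j k => b.repr (c k) j) i k =
      Algebra.trace R S (b i * c k) := by
  rw [mul_comm, ← congrFun (Algebra.traceMatrix_of_basis_mulVec b (c k)) i]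
  rfl

section TraceDual

variable {ι : Type*} [DecidableEq ι]

def IsTraceDual (b : Module.Basis ι R S) (c : ι → S) : Prop :=
  ∀ i k, Algebra.trace R S (b i * c k) = (1 : Matrix ι ι R) i k

variable {b : Module.Basis ι R S} {c : ι → S}

theorem IsTraceDual.repr_eq (hc : IsTraceDual b c) (x : S) (k : ι) :
    b.repr x k = Algebra.trace R S (x * c k) := by
  have : b.coord k = (Algebra.traceForm R S).flip (c k) :=
    b.ext fun i => by simp [hc i k, Matrix.one_apply, Finsupp.single_apply]
  exact LinearMap.congr_fun this x

theorem IsTraceDual.traceTensorHom_apply (hc : IsTraceDual b c) (z : S ⊗[R] S) (j : ι) :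
    traceTensorHom R S z (c j) = TensorProduct.equivFinsuppOfBasisLeft b z j := by
  induction z using TensorProduct.induction_on with
  | zero => simp
  | tmul u v => simp [hc.repr_eq]
  | add x y hx hy => simp [hx, hy]

theorem IsTraceDual.traceTensorHom_injective (hc : IsTraceDual b c) :
    Function.Injective (traceTensorHom R S) := fun z z' h =>
  (TensorProduct.equivFinsuppOfBasisLeft b).injective <| Finsupp.ext fun j => by
    rw [← hc.traceTensorHom_apply, ← hc.traceTensorHom_apply, h]

theorem IsTraceDual.traceTensorHom_sum_tmul [Fintype ι] (hc : IsTraceDual b c) :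
    traceTensorHom R S (∑ k, c k ⊗ₜ b k) = LinearMap.id := by
  refine LinearMap.ext fun x => b.repr.injective <| Finsupp.ext fun k => ?_
  rw [repr_traceTensorHom_apply, hc.repr_eq, mul_comm]
  simp [Finsupp.single_apply]

theorem IsTraceDual.isSeparabilityIdempotent [Fintype ι] (hc : IsTraceDual b c) :
    IsSeparabilityIdempotent R (∑ k, c k ⊗ₜ[R] b k) := by
  have := Module.Free.of_basis b
  have := Module.Finite.of_basis b
  have hid := hc.traceTensorHom_sum_tmul
  have hcomm (s : S) : (s ⊗ₜ[R] 1) * ∑ k, c k ⊗ₜ[R] b k = (1 ⊗ₜ s) * ∑ k, c k ⊗ₜ[R] b k :=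
    hc.traceTensorHom_injective <| by
      rw [traceTensorHom_tmul_one_mul, traceTensorHom_one_tmul_mul, hid, LinearMap.id_comp,
        LinearMap.comp_id]
  refine ⟨hcomm, ?_⟩
  rw [← traceTensorHom_apply_one_of_tmul_one_mul hcomm, hid, LinearMap.id_apply]

theorem IsSeparabilityIdempotent.isTraceDual [Fintype ι] {t : S ⊗[R] S}
    (ht : IsSeparabilityIdempotent R t) :
    IsTraceDual b (TensorProduct.equivFinsuppOfBasisRight b t) := by
  have := Module.Free.of_basis b
  have := Module.Finite.of_basis b
  intro i k
  rw [mul_comm, ← repr_traceTensorHom_apply, ht.traceTensorHom_eq_id, LinearMap.id_apply,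
    b.repr_self, Matrix.one_apply, Finsupp.single_apply]

variable [Fintype ι] (b)

theorem exists_isTraceDual_iff_isUnit_discr :
    (∃ c, IsTraceDual b c) ↔ IsUnit (Algebra.discr R b) := by
  rw [Algebra.discr_def]
  constructor
  · rintro ⟨c, hc⟩
    exact Matrix.isUnit_det_of_right_inverse <| Matrix.ext fun i k => by
      rw [traceMatrix_mul_repr, hc]
  · intro h
    set c : ι → S := fun k => b.equivFun.symm fun j => (Algebra.traceMatrix R b)⁻¹ j k
    have hc : (Matrix.of fun j k => b.repr (c k) j) = (Algebra.traceMatrix R b)⁻¹ := by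
      ext j k
      simp [c, Finsupp.single_apply]
    exact ⟨c, fun i k => by rw [← traceMatrix_mul_repr, hc, Matrix.mul_nonsing_inv _ h]⟩

theorem isSeparableAlgebra_iff_isUnit_discr :
    IsSeparableAlgebra R S ↔ IsUnit (Algebra.discr R b) := by
  rw [isSeparableAlgebra_iff_exists_isSeparabilityIdempotent, ← exists_isTraceDual_iff_isUnit_discr]
  exact ⟨fun ⟨_, ht⟩ => ⟨_, ht.isTraceDual⟩, fun ⟨_, hc⟩ => ⟨_, hc.isSeparabilityIdempotent⟩⟩

end TraceDual

end

theorem separable_iff_isUnit_disc_general {R : Type*} [CommRing R]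
    (f : R[X]) (hf : f.Monic) :
    f.IsSeparablePoly ↔
      IsUnit (Matrix.det (Matrix.of fun i j : Fin f.natDegree =>
        Algebra.trace R (AdjoinRoot f) (AdjoinRoot.root f ^ (i.1 + j.1)))) := by
  let pb := AdjoinRoot.powerBasis' hf
  have htrace : Algebra.traceMatrix R pb.basis = Matrix.of fun i j : Fin pb.dim =>
      Algebra.trace R (AdjoinRoot f) (AdjoinRoot.root f ^ (i.1 + j.1)) := by
    ext i j
    simp [pb, pow_add]
  rw [Polynomial.IsSeparablePoly, isSeparableAlgebra_iff_isUnit_discr pb.basis, Algebra.discr_def,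
    htrace]
  rfl

/-- Over a commutative ring with no nontrivial idempotents, a monic polynomial `f` is
separable iff the determinant of the trace matrix `(tr(x^(i+j)))` of `R[x]/(f)` is a unit. -/
theorem separable_iff_isUnit_disc {R : Type*} [CommRing R]
    (hidem : ∀ e : R, e * e = e → e = 0 ∨ e = 1) (f : R[X]) (hf : f.Monic) :
    f.IsSeparablePoly ↔
      IsUnit (Matrix.det (Matrix.of fun i j : Fin f.natDegree =>
        Algebra.trace R (AdjoinRoot f) (AdjoinRoot.root f ^ (i.1 + j.1)))) :=
  separable_iff_isUnit_disc_general f hf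
end

section
/- The number of separable polynomials of degree exactly 1 in (ℤ/p^k)[x] is φ(p^k)(p^k + p^{k-1} - 1). -/
/-!
If `u` is a unit, `R[x]/(ux + b) ≅ R`; if `u` is nilpotent and `b` a unit, `R[x]/(ux + b) = 0`.
Either way the structure map is surjective, which makes the algebra separable. Conversely, a
separable algebra is formally unramified (multiply by a separability idempotent). If `u` and `b`
are both nilpotent, then over `k = R/nil(R)` the two maps `R[x]/(ux + b) → k[ε]` sending `x` to
`0` and to `ε` agree modulo `ε` without being equal. In `ℤ/p^k` every nonunit is nilpotent, so we
count the pairs `(u, b)` with `u ≠ 0` and `u` or `b` a unit: `φ(p^k)·p^k + (p^(k-1) - 1)·φ(p^k)`.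
-/

open TensorProduct Polynomial

namespace IsSeparableAlgebra

variable {R A : Type*} [CommRing R] [CommRing A] [Algebra R A]

theorem of_surjective (h : Function.Surjective (algebraMap R A)) : IsSeparableAlgebra R A := by
  let _ : Module (A ⊗[R] A) A :=
    Module.compHom A (Algebra.TensorProduct.lmul' (S := A) R).toRingHom
  let μ := Algebra.TensorProduct.lmul' (S := A) R
  have hμ : ∀ z : A ⊗[R] A, z = μ z ⊗ₜ[R] 1 := by
    intro z
    induction z using TensorProduct.induction_on with
    | zero => simp
    | tmul a b =>
      obtain ⟨r, rfl⟩ := h b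
      rw [Algebra.algebraMap_eq_smul_one, TensorProduct.tmul_smul, map_smul,
        ← TensorProduct.smul_tmul', Algebra.TensorProduct.lmul'_apply_tmul, mul_one]
    | add x y hx hy => rw [map_add, TensorProduct.add_tmul, ← hx, ← hy]
  let L : (A ⊗[R] A) →ₗ[A ⊗[R] A] A :=
    { toFun := μ, map_add' := map_add μ, map_smul' := map_mul μ }
  have hL : Function.Bijective L :=
    ⟨fun x y hxy => by rw [hμ x, hμ y]; exact congrArg (· ⊗ₜ[R] 1) hxy,
      fun a => ⟨a ⊗ₜ 1, by simp [L, μ]⟩⟩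
  exact Module.Projective.of_equiv (LinearEquiv.ofBijective L hL)

theorem exists_separabilityIdempotent (h : IsSeparableAlgebra R A) :
    ∃ e : A ⊗[R] A, Algebra.TensorProduct.lmul' R e = 1 ∧
      ∀ z, Algebra.TensorProduct.lmul' R z = 0 → z * e = 0 := by
  let _ : Module (A ⊗[R] A) A :=
    Module.compHom A (Algebra.TensorProduct.lmul' (S := A) R).toRingHom
  let μ := Algebra.TensorProduct.lmul' (S := A) R
  let L : (A ⊗[R] A) →ₗ[A ⊗[R] A] A :=
    { toFun := μ, map_add' := map_add μ, map_smul' := map_mul μ }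
  have : Module.Projective (A ⊗[R] A) A := h
  obtain ⟨s, hs⟩ := Module.projective_lifting_property L LinearMap.id
    (fun a => ⟨a ⊗ₜ 1, by simp [L, μ]⟩)
  refine ⟨s 1, LinearMap.congr_fun hs 1, fun z hz => ?_⟩
  calc z * s 1 = s (μ z * 1) := (s.map_smul z 1).symm
    _ = 0 := by rw [hz, zero_mul, map_zero]

theorem formallyUnramified (h : IsSeparableAlgebra R A) : Algebra.FormallyUnramified R A := by
  obtain ⟨e, he1, he⟩ := h.exists_separabilityIdempotent
  rw [Algebra.FormallyUnramified.iff_comp_injective]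
  intro B _ _ I hI f₁ f₂ hf
  have hf' (a : A) : Ideal.Quotient.mk I (f₁ a) = Ideal.Quotient.mk I (f₂ a) :=
    AlgHom.congr_fun hf a
  let ψ := Algebra.TensorProduct.productMap f₁ f₂
  have hψ : (Ideal.Quotient.mkₐ R I).comp ψ
      = ((Ideal.Quotient.mkₐ R I).comp f₂).comp (Algebra.TensorProduct.lmul' R) := by
    refine Algebra.TensorProduct.ext' fun a b => ?_
    simp [ψ, hf']
  have hψe : ψ (1 - e) ∈ I := by
    rw [← Ideal.Quotient.eq_zero_iff_mem]
    simpa [he1] using AlgHom.congr_fun hψ (1 - e)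
  ext a
  have hdiff : f₁ a - f₂ a ∈ I := by
    rw [← Ideal.Quotient.eq]
    exact hf' a
  have hδ : (a ⊗ₜ[R] 1 - 1 ⊗ₜ[R] a) * (1 - e) = a ⊗ₜ[R] 1 - 1 ⊗ₜ[R] a := by
    rw [mul_sub, mul_one, he _ (by simp), sub_zero]
  have hψδ : ψ (a ⊗ₜ[R] 1 - 1 ⊗ₜ[R] a) = f₁ a - f₂ a := by simp [ψ]
  rw [← sub_eq_zero, ← hψδ, ← hδ, map_mul, ← Ideal.mem_bot, ← hI, pow_two, hψδ]
  exact Ideal.mul_mem_mul hdiff hψe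

end IsSeparableAlgebra

theorem Polynomial.not_isSeparablePoly_of_map_eq_zero {R K : Type*} [CommRing R] [CommRing K]
    [Nontrivial K] (θ : R →+* K) {f : R[X]} (hf : f.map θ = 0) : ¬ f.IsSeparablePoly := by
  intro hsep
  have := IsSeparableAlgebra.formallyUnramified hsep
  let _ : Algebra R (DualNumber K) := ((TrivSqZeroExt.inlHom K K).comp θ).toAlgebra
  have hroot (s : DualNumber K) : f.eval₂ (Algebra.ofId R (DualNumber K)) s = 0 := by
    rw [Algebra.toRingHom_ofId, eval₂_eq_eval_map, RingHom.algebraMap_toAlgebra, ← map_map, hf,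
      Polynomial.map_zero, eval_zero]
  let φ (s : DualNumber K) := AdjoinRoot.liftAlgHom f (Algebra.ofId R _) s (hroot s)
  have hφ : φ 0 = φ DualNumber.eps := by
    refine Algebra.FormallyUnramified.comp_injective _ (TrivSqZeroExt.kerIdeal_sq K K) ?_
    refine AdjoinRoot.algHom_ext ?_
    simp only [φ, AlgHom.comp_apply, AdjoinRoot.liftAlgHom_root, Ideal.Quotient.mkₐ_eq_mk,
      map_zero]
    exact (Ideal.Quotient.eq_zero_iff_mem.mpr (by simp [TrivSqZeroExt.kerIdeal])).symm
  simpa [φ] using congr(TrivSqZeroExt.snd (($hφ) (AdjoinRoot.root f)))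

section Linear

variable {R : Type*} [CommRing R] {u b : R}

theorem AdjoinRoot.algebraMap_surjective_of_isUnit (hu : IsUnit u) :
    Function.Surjective (algebraMap R (AdjoinRoot (C u * X + C b))) := by
  have hroot : root (C u * X + C b) = algebraMap R _ (-(hu.unit⁻¹ * b)) := by
    have h := AdjoinRoot.eval₂_root (C u * X + C b)
    simp only [eval₂_add, eval₂_mul, eval₂_C, eval₂_X] at h
    rw [AdjoinRoot.algebraMap_eq, map_neg, map_mul, eq_neg_of_add_eq_zero_right h, mul_neg, neg_neg,
      ← mul_assoc, ← map_mul, hu.val_inv_mul, map_one, one_mul]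
  intro z
  obtain ⟨g, rfl⟩ := AdjoinRoot.mk_surjective z
  exact ⟨g.eval _, by
    rw [← AdjoinRoot.aeval_eq, hroot, aeval_algebraMap_apply, coe_aeval_eq_eval]⟩

theorem AdjoinRoot.subsingleton_of_isNilpotent_of_isUnit (hu : IsNilpotent u) (hb : IsUnit b) :
    Subsingleton (AdjoinRoot (C u * X + C b)) := by
  have h := AdjoinRoot.eval₂_root (C u * X + C b)
  simp only [eval₂_add, eval₂_mul, eval₂_C, eval₂_X] at h
  have hb' : IsNilpotent (of (C u * X + C b) b) := by
    rw [eq_neg_of_add_eq_zero_right h]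
    exact ((Commute.all _ _).isNilpotent_mul_right (hu.map _)).neg
  exact not_nontrivial_iff_subsingleton.mp fun _ => (hb.map _).not_isNilpotent hb'

theorem Polynomial.isSeparablePoly_C_mul_X_add_C_iff
    (hR : ∀ c : R, ¬IsUnit c → IsNilpotent c) :
    (C u * X + C b).IsSeparablePoly ↔ IsUnit u ∨ IsUnit b := by
  constructor
  · contrapose!
    rintro ⟨hu, hb⟩
    have : Nontrivial R := not_subsingleton_iff_nontrivial.mp fun _ => hu (isUnit_of_subsingleton u)
    have : Nontrivial (R ⧸ nilradical R) :=
      Ideal.Quotient.nontrivial_iff.mpr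
        ((Ideal.ne_top_iff_one _).mpr (by simp [mem_nilradical, not_isNilpotent_one]))
    refine not_isSeparablePoly_of_map_eq_zero (Ideal.Quotient.mk (nilradical R)) ?_
    have hzero {c : R} (hc : ¬IsUnit c) : Ideal.Quotient.mk (nilradical R) c = 0 :=
      Ideal.Quotient.eq_zero_iff_mem.mpr (mem_nilradical.mpr (hR c hc))
    simp [hzero hu, hzero hb]
  · rintro (hu | hb)
    · exact .of_surjective (AdjoinRoot.algebraMap_surjective_of_isUnit hu)
    by_cases hu : IsUnit u
    · exact .of_surjective (AdjoinRoot.algebraMap_surjective_of_isUnit hu)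
    have := AdjoinRoot.subsingleton_of_isNilpotent_of_isUnit (hR u hu) hb
    exact .of_surjective (Function.surjective_to_subsingleton _)

end Linear

theorem ZMod.isNilpotent_of_not_isUnit {p : ℕ} (hp : p.Prime) (k : ℕ) {c : ZMod (p ^ k)}
    (hc : ¬IsUnit c) : IsNilpotent c := by
  have : NeZero (p ^ k) := ⟨pow_ne_zero k hp.ne_zero⟩
  have hdvd : p ∣ c.val := by
    by_contra h
    rw [← ZMod.natCast_zmod_val c, ZMod.isUnit_iff_coprime] at hc
    exact hc ((Nat.coprime_comm.mp (hp.coprime_iff_not_dvd.mpr h)).pow_right k)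
  refine ⟨k, ?_⟩
  rw [← ZMod.natCast_zmod_val c, ← Nat.cast_pow, ZMod.natCast_eq_zero_iff]
  exact pow_dvd_pow_of_dvd hdvd k

theorem Nat.sub_totient_prime_pow {p k : ℕ} (hp : p.Prime) (hk : 1 ≤ k) :
    p ^ k - Nat.totient (p ^ k) = p ^ (k - 1) := by
  obtain ⟨k, rfl⟩ := Nat.exists_eq_add_of_le' hk
  rw [Nat.totient_prime_pow_succ hp, Nat.add_sub_cancel, pow_succ, Nat.mul_sub, mul_one,
    Nat.sub_sub_self (Nat.le_mul_of_pos_right _ hp.pos)]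

noncomputable def Polynomial.natDegreeEqOneEquiv {R : Type*} [CommRing R] (P : R[X] → Prop) :
    {f : R[X] // f.natDegree = 1 ∧ P f} ≃ {x : R × R // x.1 ≠ 0 ∧ P (C x.1 * X + C x.2)} where
  toFun f := ⟨(f.1.coeff 1, f.1.coeff 0), by
    obtain ⟨hdeg, hP⟩ := f.2
    refine ⟨?_, eq_X_add_C_of_natDegree_le_one hdeg.le ▸ hP⟩
    have := leadingCoeff_ne_zero.mpr
      (ne_zero_of_natDegree_gt (n := 0) (by rw [hdeg]; exact Nat.one_pos))
    rwa [leadingCoeff, hdeg] at this⟩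
  invFun x := ⟨C x.1.1 * X + C x.1.2, natDegree_linear x.2.1, x.2.2⟩
  left_inv f := Subtype.ext (eq_X_add_C_of_natDegree_le_one f.2.1.le).symm
  right_inv x := by ext <;> simp

open Finset in
theorem Finset.card_filter_isUnit (M : Type*) [Monoid M] [Fintype M]
    [DecidablePred (IsUnit : M → Prop)] :
    #{u : M | IsUnit u} = Nat.card Mˣ := by
  rw [← Fintype.card_subtype, ← Nat.card_eq_fintype_card]
  exact Nat.card_congr
    ⟨fun u => u.2.unit, fun u => ⟨u, u.isUnit⟩, fun _ => rfl, fun _ => Units.ext rfl⟩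

open Finset in
theorem Nat.card_fst_ne_zero_and_isUnit_or_isUnit (R : Type*) [Ring R] [Finite R] [Nontrivial R] :
    Nat.card {x : R × R // x.1 ≠ 0 ∧ (IsUnit x.1 ∨ IsUnit x.2)}
      = Nat.card Rˣ * (Nat.card R + (Nat.card R - Nat.card Rˣ) - 1) := by
  classical
  have := Fintype.ofFinite R
  have hunits := Finset.card_filter_isUnit R
  have hnonunits : #{u : R | ¬IsUnit u} = Nat.card R - Nat.card Rˣ := by
    rw [Nat.card_eq_fintype_card (α := R), ← hunits, ← Finset.card_univ,
      ← card_filter_add_card_filter_not (s := univ) (p := IsUnit), Nat.add_sub_cancel_left]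
  have hnonzero : #{u : R | u ≠ 0 ∧ ¬IsUnit u} = #{u : R | ¬IsUnit u} - 1 := by
    rw [← card_erase_of_mem (s := {u : R | ¬IsUnit u}) (a := 0) (by simp)]
    congr 1
    ext u
    simp [and_comm]
  have hpos : 0 < #{u : R | ¬IsUnit u} := Finset.card_pos.mpr ⟨0, by simp⟩
  have hsplit : ({x : R × R | x.1 ≠ 0 ∧ (IsUnit x.1 ∨ IsUnit x.2)} : Finset (R × R))
      = ({u : R | IsUnit u} : Finset R) ×ˢ (univ : Finset R)
        ∪ ({u : R | u ≠ 0 ∧ ¬IsUnit u} : Finset R) ×ˢ ({b : R | IsUnit b} : Finset R) := by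
    ext ⟨u, b⟩
    by_cases hu : IsUnit u
    · simp [hu, hu.ne_zero]
    · simp [hu]
  have hdisj : Disjoint (({u : R | IsUnit u} : Finset R) ×ˢ (univ : Finset R))
      (({u : R | u ≠ 0 ∧ ¬IsUnit u} : Finset R) ×ˢ ({b : R | IsUnit b} : Finset R)) :=
    disjoint_left.mpr fun x hx hx' => by
      simp only [mem_product, mem_filter, mem_univ, true_and] at hx hx'
      exact hx'.1.2 hx.1
  rw [Nat.card_eq_fintype_card, Fintype.card_subtype, hsplit, card_union_of_disjoint hdisj,
    card_product, card_product, Finset.card_univ, hnonzero, hunits, ← Nat.card_eq_fintype_card]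
  rw [hnonunits] at hpos ⊢
  obtain ⟨m, hm⟩ := Nat.exists_eq_succ_of_ne_zero hpos.ne'
  rw [hm, Nat.add_succ_sub_one, Nat.succ_sub_one]
  ring

/-- The number of separable polynomials of degree exactly 1 in `(ℤ/p^k)[x]` is
`φ(p^k)(p^k + p^(k-1) - 1)`. -/
theorem count_linear_separable (p k : ℕ) (hp : p.Prime) (hk : 1 ≤ k) :
    Nat.card {f : (ZMod (p ^ k))[X] | f.natDegree = 1 ∧ f.IsSeparablePoly}
      = Nat.totient (p ^ k) * (p ^ k + p ^ (k - 1) - 1) := by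
  have : NeZero (p ^ k) := ⟨pow_ne_zero k hp.ne_zero⟩
  have : Nontrivial (ZMod (p ^ k)) :=
    ZMod.nontrivial_iff.mpr (Nat.one_lt_pow (by omega) hp.one_lt).ne'
  have hsep (x : ZMod (p ^ k) × ZMod (p ^ k)) :
      (C x.1 * X + C x.2).IsSeparablePoly ↔ IsUnit x.1 ∨ IsUnit x.2 :=
    isSeparablePoly_C_mul_X_add_C_iff fun _ => ZMod.isNilpotent_of_not_isUnit hp k
  calc _ = Nat.card {x : ZMod (p ^ k) × ZMod (p ^ k) // x.1 ≠ 0 ∧ (IsUnit x.1 ∨ IsUnit x.2)} :=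
        Nat.card_congr ((natDegreeEqOneEquiv _).trans
          (Equiv.subtypeEquivRight fun x => and_congr_right' (hsep x)))
    _ = _ := by
      rw [Nat.card_fst_ne_zero_and_isUnit_or_isUnit, Nat.card_zmod, Nat.card_eq_fintype_card,
        ZMod.card_units_eq_totient, Nat.sub_totient_prime_pow hp hk]
end
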